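/- arXiv:1702.03671 — 5 statements merged into one kernel-verified Lean document; each statement's English description precedes it below -/
import Mathlib

section
/- Let 0 < p < q ≤ ∞ and let (c_ν) be a nonnegative sequence in ℓ^p over a countable index set. If Λ_n is a set of n indices corresponding to n largest values c_ν, then (∑_{ν∉Λ_n} c_ν^q)^{1/q} ≤ C n^{-s} where s = 1/p − 1/q and C = ‖(c_ν)‖_{ℓ^p}. -/
open scoped BigOperators

/-- Stechkin's lemma on best `n`-term approximation in sequence spaces.
The second conjunct covers the case `q = ∞` (with `s = 1/p`). -/
theorem stmt0 {ι : Type*} [Countable ι] (c : ι → ℝ) (hc : ∀ i, 0 ≤ c i)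
    (p q : ℝ) (hp : 0 < p) (hpq : p < q)
    (hsum : Summable fun i => c i ^ p)
    (n : ℕ) (hn : 0 < n) (Λ : Finset ι) (hcard : Λ.card = n)
    (hlargest : ∀ i ∈ Λ, ∀ j ∉ Λ, c j ≤ c i) :
    (∑' j : {j : ι // j ∉ Λ}, c (j : ι) ^ q) ^ (1 / q)
        ≤ (∑' i, c i ^ p) ^ (1 / p) * (n : ℝ) ^ (-(1 / p - 1 / q)) ∧
      ∀ j ∉ Λ, c j ≤ (∑' i, c i ^ p) ^ (1 / p) * (n : ℝ) ^ (-(1 / p)) := by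
  have hq : 0 < q := hp.trans hpq
  have hn' : (0:ℝ) < n := by exact_mod_cast hn
  set T := ∑' i, c i ^ p with hTdef
  have hT0 : 0 ≤ T := tsum_nonneg fun i => Real.rpow_nonneg (hc i) p
  -- key inequality
  have key : ∀ j ∉ Λ, (n : ℝ) * c j ^ p ≤ T := by
    intro j hj
    have h1 : ∑ _i ∈ Λ, c j ^ p ≤ ∑ i ∈ Λ, c i ^ p :=
      Finset.sum_le_sum fun i hi =>
        Real.rpow_le_rpow (hc j) (hlargest i hi j hj) hp.le
    have h2 : ∑ i ∈ Λ, c i ^ p ≤ T :=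
      Summable.sum_le_tsum Λ (fun i _ => Real.rpow_nonneg (hc i) p) hsum
    calc (n : ℝ) * c j ^ p = ∑ _i ∈ Λ, c j ^ p := by
          rw [Finset.sum_const, hcard, nsmul_eq_mul]
      _ ≤ T := h1.trans h2
  set M := T ^ (1/p) * (n : ℝ) ^ (-(1/p)) with hMdef
  have hM0 : 0 ≤ M :=
    mul_nonneg (Real.rpow_nonneg hT0 _) (Real.rpow_nonneg hn'.le _)
  have bound2 : ∀ j ∉ Λ, c j ≤ M := by
    intro j hj
    have h : c j ^ p ≤ T / n := by
      rw [le_div_iff₀ hn']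
      calc c j ^ p * n = n * c j ^ p := by ring
        _ ≤ T := key j hj
    have h2 := Real.rpow_le_rpow (Real.rpow_nonneg (hc j) p) h
        (le_of_lt (one_div_pos.mpr hp))
    have h3 : (c j ^ p) ^ (1/p) = c j := by
      rw [← Real.rpow_mul (hc j), mul_one_div, div_self hp.ne', Real.rpow_one]
    have h4 : (T / (n:ℝ)) ^ (1/p) = M := by
      rw [div_eq_mul_inv, Real.mul_rpow hT0 (inv_nonneg.mpr hn'.le),
        Real.inv_rpow hn'.le, ← Real.rpow_neg hn'.le, hMdef]
    rw [h3, h4] at h2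
    exact h2
  have hqp : 0 ≤ q - p := by linarith
  have pointwise : ∀ j : {j : ι // j ∉ Λ},
      c (j : ι) ^ q ≤ M ^ (q - p) * c (j : ι) ^ p := by
    rintro ⟨j, hj⟩
    have : c j ^ q = c j ^ (q - p) * c j ^ p := by
      rw [← Real.rpow_add' (hc j) (by rw [sub_add_cancel]; exact hq.ne'),
        sub_add_cancel]
    rw [this]
    exact mul_le_mul_of_nonneg_right
      (Real.rpow_le_rpow (hc j) (bound2 j hj) hqp)
      (Real.rpow_nonneg (hc j) p)
  have hsub : Summable fun j : {j : ι // j ∉ Λ} => c (j : ι) ^ p :=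
    hsum.subtype _
  have hsq : Summable fun j : {j : ι // j ∉ Λ} => c (j : ι) ^ q :=
    Summable.of_nonneg_of_le (fun j => Real.rpow_nonneg (hc j) q)
      pointwise (hsub.mul_left _)
  have htsumle : (∑' j : {j : ι // j ∉ Λ}, c (j : ι) ^ q) ≤ M ^ (q - p) * T := by
    calc (∑' j : {j : ι // j ∉ Λ}, c (j : ι) ^ q)
        ≤ ∑' j : {j : ι // j ∉ Λ}, M ^ (q - p) * c (j : ι) ^ p :=
          Summable.tsum_le_tsum pointwise hsq (hsub.mul_left _)
      _ = M ^ (q - p) * ∑' j : {j : ι // j ∉ Λ}, c (j : ι) ^ p := tsum_mul_left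
      _ ≤ M ^ (q - p) * T := by
          refine mul_le_mul_of_nonneg_left ?_ (Real.rpow_nonneg hM0 _)
          exact Summable.tsum_subtype_le (fun i => c i ^ p)
            {j | j ∉ Λ} (fun i => Real.rpow_nonneg (hc i) p) hsum
  constructor
  · -- main inequality
    rcases eq_or_lt_of_le hT0 with hT | hT
    · -- T = 0 : every c i = 0
      have hczero : ∀ i, c i = 0 := by
        intro i
        have h1 : c i ^ p ≤ T :=
          Summable.le_tsum hsum i fun j _ => Real.rpow_nonneg (hc j) p
        have h2 : c i ^ p = 0 :=
          le_antisymm (by rw [← hT] at h1; exact h1) (Real.rpow_nonneg (hc i) p)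
        by_contra hne
        have hpos : 0 < c i := lt_of_le_of_ne (hc i) (Ne.symm hne)
        exact absurd h2 (ne_of_gt (Real.rpow_pos_of_pos hpos p))
      have hL : (∑' j : {j : ι // j ∉ Λ}, c (j : ι) ^ q) = 0 := by
        simp [hczero, Real.zero_rpow hq.ne']
      rw [hL, ← hT, Real.zero_rpow (by positivity : (1:ℝ)/q ≠ 0),
        Real.zero_rpow (by positivity : (1:ℝ)/p ≠ 0), zero_mul]
    · -- T > 0
      have hLHS := Real.rpow_le_rpow
        (tsum_nonneg fun j : {j : ι // j ∉ Λ} => Real.rpow_nonneg (hc (j:ι)) q) htsumle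
        (le_of_lt (one_div_pos.mpr hq))
      refine hLHS.trans (le_of_eq ?_)
      rw [hMdef,
        Real.mul_rpow (Real.rpow_nonneg hT0 _) (Real.rpow_nonneg hn'.le _),
        ← Real.rpow_mul hT0, ← Real.rpow_mul hn'.le]
      rw [show T ^ (1/p * (q-p)) * (n:ℝ) ^ (-(1/p) * (q-p)) * T
            = T ^ (1/p * (q-p) + 1) * (n:ℝ) ^ (-(1/p) * (q-p)) from by
          rw [Real.rpow_add hT, Real.rpow_one]; ring]
      rw [Real.mul_rpow (Real.rpow_nonneg hT0 _) (Real.rpow_nonneg hn'.le _),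
        ← Real.rpow_mul hT0, ← Real.rpow_mul hn'.le]
      congr 1
      · congr 1
        field_simp
        ring
      · congr 1
        field_simp
  · intro j hj
    exact bound2 j hj
end

section
/- Let 0 < q < ∞ and 0 < p < 2 satisfy 1/p = 1/q + 1/2. Let (t_ν)_{ν∈F} be nonnegative reals and (ρ_j)_{j≥1} with ρ_j > 1 and (ρ_j^{−1}) ∈ ℓ^q. If ∑_{ν∈F} (ρ^ν t_ν)^2 < ∞, then ∑_{ν∈F} t_ν^p < ∞, with the bound (∑ t_ν^p)^{1/p} ≤ (∑ (ρ^ν t_ν)^2)^{1/2} (∑_{ν∈F} ρ^{−qν})^{1/q}. -/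
/-!
Write `t_ν = (ρ^ν t_ν) · ρ^{-ν}` and apply Hölder's inequality with exponents `2`, `q`, `p`.
It remains to see that `∑_ν ρ^{-qν} = ∑_ν ∏_j x_j^{ν_j}` with `x_j = ρ_j^{-q} ∈ [0, 1)` summable
is finite: every finite partial sum is at most `∏_j (1 - x_j)⁻¹ ≤ exp (∑_j x_j / (1 - x_j))`.
-/

open Finset

section

variable {ι : Type*} {x : ι → ℝ}

lemma sum_finsuppProd_pow_le_prod_inv_one_sub (hx0 : ∀ j, 0 ≤ x j) (hx1 : ∀ j, x j < 1)
    {s : Finset ι} {S : Finset (ι →₀ ℕ)} (hS : ∀ ν ∈ S, ν.support ⊆ s) :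
    ∑ ν ∈ S, ν.prod (fun j k => x j ^ k) ≤ ∏ j ∈ s, (1 - x j)⁻¹ := by
  classical
  let restrict : (ι →₀ ℕ) → (s → ℕ) := fun ν j => ν j
  let T : s → Finset ℕ := fun j => S.image (· j)
  have hinj : Set.InjOn restrict S := fun ν hν μ hμ h => by
    ext j
    by_cases hj : j ∈ s
    · exact congrFun h ⟨j, hj⟩
    · rw [Finsupp.notMem_support_iff.mp fun h => hj (hS ν hν h),
        Finsupp.notMem_support_iff.mp fun h => hj (hS μ hμ h)]
  have hsub : S.image restrict ⊆ Fintype.piFinset T := by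
    simp only [subset_iff, mem_image, Fintype.mem_piFinset, forall_exists_index, and_imp]
    rintro _ ν hν rfl j
    exact mem_image_of_mem _ hν
  calc ∑ ν ∈ S, ν.prod (fun j k => x j ^ k)
      = ∑ f ∈ S.image restrict, ∏ j : s, x j ^ f j := by
        rw [sum_image hinj]
        refine sum_congr rfl fun ν hν => ?_
        rw [Finsupp.prod_of_support_subset ν (hS ν hν) _ fun _ _ => pow_zero _, ← prod_coe_sort]
    _ ≤ ∑ f ∈ Fintype.piFinset T, ∏ j : s, x j ^ f j :=
        sum_le_sum_of_subset_of_nonneg hsub fun _ _ _ =>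
          prod_nonneg fun j _ => pow_nonneg (hx0 j) _
    _ = ∏ j : s, ∑ k ∈ T j, x j ^ k := (prod_univ_sum T _).symm
    _ ≤ ∏ j : s, (1 - x j)⁻¹ := by
        refine prod_le_prod (fun j _ => sum_nonneg fun k _ => pow_nonneg (hx0 j) k) fun j _ => ?_
        rw [← tsum_geometric_of_lt_one (hx0 j) (hx1 j)]
        exact (summable_geometric_of_lt_one (hx0 j) (hx1 j)).sum_le_tsum _
          fun k _ => pow_nonneg (hx0 j) k
    _ = ∏ j ∈ s, (1 - x j)⁻¹ := prod_coe_sort s fun j => (1 - x j)⁻¹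

lemma summable_div_one_sub (hx0 : ∀ j, 0 ≤ x j) (hx : Summable x) :
    Summable fun j => x j / (1 - x j) := by
  refine (hx.mul_left 2).of_norm_bounded_eventually ?_
  filter_upwards [hx.tendsto_cofinite_zero.eventually (gt_mem_nhds one_half_pos)] with j hj
  rw [Real.norm_of_nonneg (div_nonneg (hx0 j) (by linarith)), div_le_iff₀ (by linarith)]
  nlinarith [hx0 j]

lemma prod_inv_one_sub_le_exp_tsum (hx0 : ∀ j, 0 ≤ x j) (hx1 : ∀ j, x j < 1)
    (hx : Summable x) (s : Finset ι) :
    ∏ j ∈ s, (1 - x j)⁻¹ ≤ Real.exp (∑' j, x j / (1 - x j)) := by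
  have hy0 : ∀ j, 0 ≤ x j / (1 - x j) := fun j => div_nonneg (hx0 j) (by linarith [hx1 j])
  calc ∏ j ∈ s, (1 - x j)⁻¹
      = ∏ j ∈ s, (x j / (1 - x j) + 1) := prod_congr rfl fun j _ => by
        field_simp [(sub_pos.mpr (hx1 j)).ne']
        ring
    _ ≤ ∏ j ∈ s, Real.exp (x j / (1 - x j)) :=
        prod_le_prod (fun j _ => by linarith [hy0 j]) fun j _ => Real.add_one_le_exp _
    _ = Real.exp (∑ j ∈ s, x j / (1 - x j)) := (Real.exp_sum s _).symm
    _ ≤ Real.exp (∑' j, x j / (1 - x j)) :=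
        Real.exp_le_exp.mpr <| (summable_div_one_sub hx0 hx).sum_le_tsum s fun j _ => hy0 j

theorem summable_finsuppProd_pow (hx0 : ∀ j, 0 ≤ x j) (hx1 : ∀ j, x j < 1)
    (hx : Summable x) : Summable fun ν : ι →₀ ℕ => ν.prod fun j k => x j ^ k := by
  classical
  refine summable_of_sum_le (c := Real.exp (∑' j, x j / (1 - x j)))
    (fun ν => prod_nonneg fun j _ => pow_nonneg (hx0 j) _) fun S => ?_
  calc ∑ ν ∈ S, ν.prod (fun j k => x j ^ k)
      ≤ ∏ j ∈ S.biUnion Finsupp.support, (1 - x j)⁻¹ :=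
        sum_finsuppProd_pow_le_prod_inv_one_sub hx0 hx1 fun ν hν => subset_biUnion_of_mem _ hν
    _ ≤ _ := prod_inv_one_sub_le_exp_tsum hx0 hx1 hx _

end

lemma Real.rpow_neg_mul_natCast {r : ℝ} (hr : 0 ≤ r) (q : ℝ) (n : ℕ) :
    r ^ (-(q * n)) = (r⁻¹ ^ q) ^ n := by
  rw [← Real.rpow_natCast, ← Real.rpow_mul (inv_nonneg.mpr hr), Real.inv_rpow hr,
    ← Real.rpow_neg hr]

lemma inv_prod_pow_rpow {ι : Type*} {ρ : ι → ℝ} (hρ : ∀ j, 0 ≤ ρ j) (q : ℝ) (s : Finset ι)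
    (n : ι → ℕ) : (∏ j ∈ s, ρ j ^ n j)⁻¹ ^ q = ∏ j ∈ s, ρ j ^ (-(q * n j)) := by
  rw [← prod_inv_distrib,
    ← Real.finsetProd_rpow _ _ fun j _ => inv_nonneg.mpr (pow_nonneg (hρ j) _)]
  refine prod_congr rfl fun j _ => ?_
  rw [Real.rpow_neg_mul_natCast (hρ j), Real.rpow_pow_comm (inv_nonneg.mpr (hρ j)), inv_pow]

theorem stmt2_general (p q : ℝ) (hq : 0 < q)
    (hpq : 1 / p = 1 / q + 1 / 2)
    (t : (ℕ →₀ ℕ) → ℝ) (ht : ∀ ν, 0 ≤ t ν)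
    (ρ : ℕ → ℝ) (hρ : ∀ j, 1 < ρ j)
    (hρq : Summable fun j => (ρ j)⁻¹ ^ q)
    (hw : Summable fun ν : ℕ →₀ ℕ =>
      ((∏ j ∈ ν.support, ρ j ^ (ν j : ℕ)) * t ν) ^ 2) :
    (Summable fun ν : ℕ →₀ ℕ => t ν ^ p) ∧
      (∑' ν : ℕ →₀ ℕ, t ν ^ p) ^ (1 / p)
        ≤ (∑' ν : ℕ →₀ ℕ, ((∏ j ∈ ν.support, ρ j ^ (ν j : ℕ)) * t ν) ^ 2) ^ (1 / 2 : ℝ)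
          * (∑' ν : ℕ →₀ ℕ, ∏ j ∈ ν.support, ρ j ^ (-(q * (ν j : ℝ)))) ^ (1 / q) := by
  set w : (ℕ →₀ ℕ) → ℝ := fun ν => ∏ j ∈ ν.support, ρ j ^ (ν j : ℕ)
  have hρ0 : ∀ j, 0 < ρ j := fun j => one_pos.trans (hρ j)
  have hw0 : ∀ ν, 0 < w ν := fun ν => prod_pos fun j _ => pow_pos (hρ0 j) _
  have hholder : Real.HolderTriple 2 q p :=
    ⟨by simp only [inv_eq_one_div, hpq]; ring, two_pos, hq⟩
  have hweight : ∀ ν, (w ν)⁻¹ ^ q = ∏ j ∈ ν.support, ρ j ^ (-(q * (ν j : ℝ))) :=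
    fun ν => inv_prod_pow_rpow (fun j => (hρ0 j).le) q _ _
  have hweight_summable : Summable fun ν => (w ν)⁻¹ ^ q := by
    simp only [hweight, Real.rpow_neg_mul_natCast (hρ0 _).le]
    have hρinv0 : ∀ j, 0 ≤ (ρ j)⁻¹ := fun j => inv_nonneg.mpr (hρ0 j).le
    exact summable_finsuppProd_pow (fun j => Real.rpow_nonneg (hρinv0 j) q)
      (fun j => Real.rpow_lt_one (hρinv0 j) (inv_lt_one_of_one_lt₀ (hρ j)) hq) hρq
  have hwt_summable : Summable fun ν => (w ν * t ν) ^ (2 : ℝ) := by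
    simpa only [Real.rpow_two] using hw
  have hwt0 : ∀ ν, 0 ≤ w ν * t ν := fun ν => mul_nonneg (hw0 ν).le (ht ν)
  have hwinv0 : ∀ ν, 0 ≤ (w ν)⁻¹ := fun ν => inv_nonneg.mpr (hw0 ν).le
  have hcancel : ∀ ν, w ν * t ν * (w ν)⁻¹ = t ν := fun ν => by
    rw [mul_comm, ← mul_assoc, inv_mul_cancel₀ (hw0 ν).ne', one_mul]
  constructor
  · simpa only [hcancel] using
      Real.summable_Lr_of_Lp_Lq_of_nonneg hholder hwt0 hwinv0 hwt_summable hweight_summable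
  · simpa only [hcancel, Real.rpow_two, hweight] using
      Real.Lr_le_Lp_mul_Lq_tsum_of_nonneg hholder hwt0 hwinv0 hwt_summable hweight_summable

/-- Hölder's inequality argument: weighted `ℓ²` summability with weights `ρ^ν`,
`ρ_j > 1`, `(ρ_j⁻¹) ∈ ℓ^q`, implies `ℓ^p` summability with `1/p = 1/q + 1/2`. -/
theorem stmt2 (p q : ℝ) (hq : 0 < q) (hp : 0 < p) (hp2 : p < 2)
    (hpq : 1 / p = 1 / q + 1 / 2)
    (t : (ℕ →₀ ℕ) → ℝ) (ht : ∀ ν, 0 ≤ t ν)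
    (ρ : ℕ → ℝ) (hρ : ∀ j, 1 < ρ j)
    (hρq : Summable fun j => (ρ j)⁻¹ ^ q)
    (hw : Summable fun ν : ℕ →₀ ℕ =>
      ((∏ j ∈ ν.support, ρ j ^ (ν j : ℕ)) * t ν) ^ 2) :
    (Summable fun ν : ℕ →₀ ℕ => t ν ^ p) ∧
      (∑' ν : ℕ →₀ ℕ, t ν ^ p) ^ (1 / p)
        ≤ (∑' ν : ℕ →₀ ℕ, ((∏ j ∈ ν.support, ρ j ^ (ν j : ℕ)) * t ν) ^ 2) ^ (1 / 2 : ℝ)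
          * (∑' ν : ℕ →₀ ℕ, ∏ j ∈ ν.support, ρ j ^ (-(q * (ν j : ℝ)))) ^ (1 / q) :=
  stmt2_general p q hq hpq t ht ρ hρ hρq hw
end

section
/- Let (σ̂_k)_{k≥0} be nonnegative reals, 0 < δ < 1, Ĉ₀ > 0, and θ̂ := 1 + (1−1/√2)². Suppose σ̂_0 ≤ Ĉ₀ and for all k ≥ 1: σ̂_k ≤ (∑_{ℓ=0}^{k−1} ((ln θ̂)^{k−ℓ}/(k−ℓ)!) δ^{k-\ell} σ̂_ℓ)^{1/2} σ̂_k^{1/2} + Ĉ₀^{1/2} δ^{k/2} σ̂_k^{1/2}. Then σ̂_k ≤ 2 Ĉ₀ δ^k for all k ≥ 0. -/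
open Finset Real

/-!
Strong induction on `k`. If `σ ℓ ≤ 2 C₀ δ^ℓ` for `ℓ < k`, the sum under the first square root is at
most `(exp x - 1) · 2 C₀ δ^k`, because `∑_{j=1}^k x^j / j! ≤ exp x - 1`. With
`2 (exp x - 1) ≤ (√2 - 1)²` the recursion becomes `σ_k ≤ √(2 C₀ δ^k) · √σ_k`, i.e.
`σ_k ≤ 2 C₀ δ^k`. For `x = log (1 + (1 - 1/√2)²)` the condition holds with equality.
-/

lemma le_sq_of_le_mul_sqrt {y A : ℝ} (hy : 0 ≤ y) (h : y ≤ A * √y) : y ≤ A ^ 2 := by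
  nlinarith [mul_self_sqrt hy, sqrt_nonneg y, sq_nonneg (A - √y)]

lemma sum_range_pow_sub_div_factorial_le {x : ℝ} (hx : 0 ≤ x) (k : ℕ) :
    ∑ ℓ ∈ range k, x ^ (k - ℓ) / ((k - ℓ).factorial : ℝ) ≤ exp x - 1 := by
  have hreflect : ∑ ℓ ∈ range k, x ^ (k - ℓ) / ((k - ℓ).factorial : ℝ)
      = ∑ j ∈ range k, x ^ (j + 1) / ((j + 1).factorial : ℝ) := by
    rw [← sum_range_reflect]
    refine sum_congr rfl fun j hj => ?_
    rw [show k - (k - 1 - j) = j + 1 by have := mem_range.mp hj; omega]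
  have hexp := sum_le_exp_of_nonneg hx (k + 1)
  rw [sum_range_succ'] at hexp
  simp only [pow_zero, Nat.factorial_zero, Nat.cast_one, div_one] at hexp
  linarith

lemma sum_range_pow_sub_mul_le_of_le_geometric {x δ M : ℝ} {σ : ℕ → ℝ} {k : ℕ}
    (hx : 0 ≤ x) (hδ : 0 ≤ δ) (hM : 0 ≤ M) (hσ : ∀ ℓ < k, σ ℓ ≤ M * δ ^ ℓ) :
    ∑ ℓ ∈ range k, x ^ (k - ℓ) / ((k - ℓ).factorial : ℝ) * δ ^ (k - ℓ) * σ ℓ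
      ≤ (exp x - 1) * (M * δ ^ k) := by
  calc ∑ ℓ ∈ range k, x ^ (k - ℓ) / ((k - ℓ).factorial : ℝ) * δ ^ (k - ℓ) * σ ℓ
      ≤ ∑ ℓ ∈ range k, x ^ (k - ℓ) / ((k - ℓ).factorial : ℝ) * (M * δ ^ k) := by
        refine sum_le_sum fun ℓ hℓ => ?_
        have hℓk := mem_range.mp hℓ
        calc x ^ (k - ℓ) / ((k - ℓ).factorial : ℝ) * δ ^ (k - ℓ) * σ ℓ
            ≤ x ^ (k - ℓ) / ((k - ℓ).factorial : ℝ) * δ ^ (k - ℓ) * (M * δ ^ ℓ) := by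
              gcongr
              exact hσ ℓ hℓk
          _ = x ^ (k - ℓ) / ((k - ℓ).factorial : ℝ) * (M * δ ^ (k - ℓ + ℓ)) := by ring
          _ = x ^ (k - ℓ) / ((k - ℓ).factorial : ℝ) * (M * δ ^ k) := by
              rw [Nat.sub_add_cancel hℓk.le]
    _ = (∑ ℓ ∈ range k, x ^ (k - ℓ) / ((k - ℓ).factorial : ℝ)) * (M * δ ^ k) := by
        rw [sum_mul]
    _ ≤ (exp x - 1) * (M * δ ^ k) := by
        gcongr
        exact sum_range_pow_sub_div_factorial_le hx k

lemma le_two_mul_pow_of_sqrt_recursion (σ : ℕ → ℝ) (hσ : ∀ k, 0 ≤ σ k) {δ C₀ x : ℝ}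
    (hδ : 0 ≤ δ) (h0 : σ 0 ≤ C₀) (hx : 0 ≤ x) (hxθ : 2 * (exp x - 1) ≤ (√2 - 1) ^ 2)
    (hrec : ∀ k, 1 ≤ k →
      σ k ≤ √(∑ ℓ ∈ range k, x ^ (k - ℓ) / ((k - ℓ).factorial : ℝ) * δ ^ (k - ℓ) * σ ℓ) * √(σ k)
        + √C₀ * √(δ ^ k) * √(σ k)) :
    ∀ k, σ k ≤ 2 * C₀ * δ ^ k := by
  have hC₀ : 0 ≤ C₀ := (hσ 0).trans h0
  intro k
  induction k using Nat.strong_induction_on with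
  | _ k ih =>
  rcases Nat.eq_zero_or_pos k with rfl | hk
  · linarith
  have hB : 0 ≤ C₀ * δ ^ k := by positivity
  have hsum := sum_range_pow_sub_mul_le_of_le_geometric hx hδ (by positivity : 0 ≤ 2 * C₀) ih
  have hsqrt_sum : √(∑ ℓ ∈ range k, x ^ (k - ℓ) / ((k - ℓ).factorial : ℝ) * δ ^ (k - ℓ) * σ ℓ)
      ≤ (√2 - 1) * √(C₀ * δ ^ k) := by
    have hθ : √(2 * (exp x - 1)) ≤ √2 - 1 := by
      rw [sqrt_le_left (by nlinarith [one_lt_sqrt_two])]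
      exact hxθ
    calc _ ≤ √(2 * (exp x - 1) * (C₀ * δ ^ k)) := sqrt_le_sqrt (by linarith)
      _ = √(2 * (exp x - 1)) * √(C₀ * δ ^ k) := sqrt_mul' _ hB
      _ ≤ (√2 - 1) * √(C₀ * δ ^ k) := by gcongr
  have hkey : σ k ≤ √(2 * C₀ * δ ^ k) * √(σ k) := by
    calc σ k ≤ (√2 - 1) * √(C₀ * δ ^ k) * √(σ k) + √(C₀ * δ ^ k) * √(σ k) := by
          have := mul_le_mul_of_nonneg_right hsqrt_sum (sqrt_nonneg (σ k))
          rw [sqrt_mul hC₀] at this ⊢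
          linarith [hrec k hk]
      _ = √(2 * C₀ * δ ^ k) * √(σ k) := by
          rw [mul_assoc 2, sqrt_mul zero_le_two]
          ring
  simpa [sq_sqrt (by positivity : 0 ≤ 2 * C₀ * δ ^ k)] using le_sq_of_le_mul_sqrt (hσ k) hkey

lemma two_mul_exp_log_theta_sub_one :
    2 * (exp (log (1 + (1 - 1 / √2) ^ 2)) - 1) = (√2 - 1) ^ 2 := by
  have h2 : √2 ^ 2 = 2 := sq_sqrt zero_le_two
  rw [exp_log (by positivity)]
  field_simp
  nlinarith [h2]

theorem stmt12_general (σ : ℕ → ℝ) (hσ : ∀ k, 0 ≤ σ k)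
    (δ C₀ : ℝ) (hδ0 : 0 < δ)
    (h0 : σ 0 ≤ C₀)
    (hrec : ∀ k, 1 ≤ k →
      σ k ≤ Real.sqrt (∑ ℓ ∈ Finset.range k,
              Real.log (1 + (1 - 1 / Real.sqrt 2) ^ 2) ^ (k - ℓ) / ((k - ℓ).factorial : ℝ)
                * δ ^ (k - ℓ) * σ ℓ) * Real.sqrt (σ k)
            + Real.sqrt C₀ * Real.sqrt (δ ^ k) * Real.sqrt (σ k)) :
    ∀ k, σ k ≤ 2 * C₀ * δ ^ k :=
  le_two_mul_pow_of_sqrt_recursion σ hσ hδ0.le h0 (log_nonneg (by nlinarith))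
    two_mul_exp_log_theta_sub_one.le hrec

/-- Induction argument from the Hermite summability proof: the recursive bound on
`σ̂_k` implies the geometric decay `σ̂_k ≤ 2 Ĉ₀ δ^k`. -/
theorem stmt12 (σ : ℕ → ℝ) (hσ : ∀ k, 0 ≤ σ k)
    (δ C₀ : ℝ) (hδ0 : 0 < δ) (hδ1 : δ < 1) (hC₀ : 0 < C₀)
    (h0 : σ 0 ≤ C₀)
    (hrec : ∀ k, 1 ≤ k →
      σ k ≤ Real.sqrt (∑ ℓ ∈ Finset.range k,
              Real.log (1 + (1 - 1 / Real.sqrt 2) ^ 2) ^ (k - ℓ) / ((k - ℓ).factorial : ℝ)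
                * δ ^ (k - ℓ) * σ ℓ) * Real.sqrt (σ k)
            + Real.sqrt C₀ * Real.sqrt (δ ^ k) * Real.sqrt (σ k)) :
    ∀ k, σ k ≤ 2 * C₀ * δ ^ k :=
  stmt12_general σ hσ δ C₀ hδ0 h0 hrec
end

section
/- Let r ≥ 1 be an integer, K > 0, and for multi-indices μ, ν ∈ F with ν ≤ μ and ‖μ‖_∞ ≤ r, suppose |μ−ν| = ℓ implies μ!/ν! ≤ r^ℓ. Then for nonnegative reals ψ_j with ∑_j ρ_j ψ_j ≤ K pointwise and ∑_j ρ_j |∇ψ_j| ≤ K̂, the bound ∑_{ν∈S_μ} ε̂(μ,ν) ≤ √r K̂ e^{√r K} holds, where ε̂(μ,ν) := ∑_{j∈supp(μ−ν)} √(μ!/ν!) · (ρ^{μ−ν−e_j} |ψ|^{μ−ν−e_j}/(μ−ν−e_j)!) · ρ_j|∇ψ_j| and S_μ = {ν ≤ μ : ν ≠ μ}. -/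
open scoped BigOperators

/-- Factorial of a multi-index: `ν! = ∏_j ν_j!`. -/
noncomputable def mfact (ν : ℕ →₀ ℕ) : ℝ := ν.prod fun _ n => (n.factorial : ℝ)

/-- `ρ^τ ψ^τ / τ! = ∏_j (ρ_j ψ_j)^{τ_j} / τ_j!`. -/
noncomputable def wpow (ρ ψ : ℕ → ℝ) (τ : ℕ →₀ ℕ) : ℝ :=
  τ.prod fun j n => (ρ j * ψ j) ^ n / (n.factorial : ℝ)

/-- The quantity `ε̂(μ,ν)` from the Hermite summability proof, with `φ_j` playing the
role of `|∇ψ_j|`. -/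
noncomputable def epshat (ρ ψ φ : ℕ → ℝ) (μ ν : ℕ →₀ ℕ) : ℝ :=
  ∑ j ∈ (μ - ν).support,
    Real.sqrt (mfact μ / mfact ν) * wpow ρ ψ (μ - ν - Finsupp.single j 1) * (ρ j * φ j)

/-!
Since `μ!/ν! ≤ r^|μ-ν|`, the factor `√(μ!/ν!)` can be absorbed into the weights by replacing
`ρ` with `√r ρ`, at the cost of one extra factor `√r`. After the substitution
`σ = μ - ν - e_j`, the pairs `(ν, j)` with `ν < μ`, `j ∈ supp (μ - ν)` are exactly the pairs
with `j ∈ supp μ`, `σ ≤ μ - e_j`. The sum over `σ ≤ κ` of `(√r ρ)^σ ψ^σ / σ!` factorises into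
`∏_j ∑_{m ≤ κ_j} (√r ρ_j ψ_j)^m / m!`, which is at most `exp (√r ∑_j ρ_j ψ_j) ≤ e^{√r K}`;
what remains is `√r ∑_j ρ_j φ_j ≤ √r K̂`.
-/

open Finset Finsupp

theorem Finset.sum_finsupp_prod_apply {ι α R : Type*} [Zero α] [CommSemiring R]
    (s : Finset ι) (t : ι → Finset α) (f : ι → α → R) :
    ∑ σ ∈ s.finsupp t, ∏ i ∈ s, f i (σ i) = ∏ i ∈ s, ∑ a ∈ t i, f i a := by
  classical
  rw [prod_sum, Finset.finsupp, sum_map]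
  refine sum_congr (by congr) fun p _ => ?_
  rw [← prod_attach s]
  exact prod_congr rfl fun i _ => by simp [indicator_of_mem i.2]

theorem Finset.sum_Iic_tsub {α M : Type*} [AddCommMonoid α] [PartialOrder α]
    [CanonicallyOrderedAdd α] [Sub α] [OrderedSub α] [AddLeftReflectLE α]
    [LocallyFiniteOrderBot α] [AddCommMonoid M] (a : α) (f : α → M) :
    ∑ b ∈ Iic a, f (a - b) = ∑ b ∈ Iic a, f b :=
  sum_nbij' (a - ·) (a - ·) (fun _ _ => mem_Iic.mpr tsub_le_self)
    (fun _ _ => mem_Iic.mpr tsub_le_self) (fun _ hb => tsub_tsub_cancel_of_le (mem_Iic.mp hb))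
    (fun _ hb => tsub_tsub_cancel_of_le (mem_Iic.mp hb)) fun _ _ => rfl

namespace Finsupp

variable {ι : Type*}

theorem degree_tsub_single_add_one {τ : ι →₀ ℕ} {j : ι} (hj : j ∈ τ.support) :
    degree (τ - single j 1) + 1 = degree τ := by
  conv_rhs => rw [← tsub_add_cancel_of_le (single_le_iff.mpr
    (Nat.one_le_iff_ne_zero.mpr (mem_support_iff.mp hj)))]
  rw [map_add, degree_single]

variable [DecidableEq ι]

theorem Iic_eq_finsupp (μ : ι →₀ ℕ) : Iic μ = μ.support.finsupp fun i => Iic (μ i) := by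
  ext σ
  simp only [mem_Iic, mem_finsupp_iff]
  refine ⟨fun h => ⟨support_mono h, fun i _ => h i⟩, fun h i => ?_⟩
  by_cases hi : i ∈ μ.support
  · exact h.2 i hi
  · rw [notMem_support_iff.mp (mt (fun h' => h.1 h') hi)]
    exact Nat.zero_le _

theorem sum_Iic_prod {R : Type*} [CommSemiring R] (μ : ι →₀ ℕ) (f : ι → ℕ → R)
    (hf : ∀ i, f i 0 = 1) :
    ∑ σ ∈ Iic μ, σ.prod f = μ.prod fun i m => ∑ a ∈ Iic m, f i a := by
  rw [Iic_eq_finsupp, Finsupp.prod, ← sum_finsupp_prod_apply]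
  exact Finset.sum_congr rfl fun σ hσ =>
    prod_of_support_subset _ (mem_finsupp_iff.mp hσ).1 _ fun i _ => hf i

theorem sum_Iio_sum_support_tsub {M : Type*} [AddCommMonoid M] (μ : ι →₀ ℕ)
    (F : ι → (ι →₀ ℕ) → M) :
    ∑ ν ∈ Iio μ, ∑ j ∈ (μ - ν).support, F j (μ - ν - single j 1)
      = ∑ j ∈ μ.support, ∑ σ ∈ Iic (μ - single j 1), F j σ := by
  rw [sum_comm' (t' := μ.support) (s' := fun j => Iic (μ - single j 1))]
  · refine Finset.sum_congr rfl fun j _ => ?_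
    conv_rhs => rw [← sum_Iic_tsub]
    exact Finset.sum_congr rfl fun ν _ => by rw [tsub_right_comm]
  · intro ν j
    simp only [mem_Iio, mem_Iic, mem_support_iff, tsub_apply, lt_iff_le_and_ne, le_def, ne_eq,
      Finsupp.ext_iff, not_forall, single_apply]
    constructor
    · rintro ⟨⟨hle, -⟩, hj⟩
      refine ⟨fun k => ?_, by omega⟩
      split_ifs <;> grind
    · rintro ⟨hle, hj⟩
      have hνj := hle j
      rw [if_pos rfl] at hνj
      exact ⟨⟨fun k => (hle k).trans (Nat.sub_le _ _), j, by omega⟩, by omega⟩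

end Finsupp

section Weights

variable {ρ ψ φ : ℕ → ℝ}

theorem wpow_nonneg (hρ : ∀ j, 0 ≤ ρ j) (hψ : ∀ j, 0 ≤ ψ j) (τ : ℕ →₀ ℕ) :
    0 ≤ wpow ρ ψ τ :=
  prod_nonneg fun j _ => div_nonneg (pow_nonneg (mul_nonneg (hρ j) (hψ j)) _) (Nat.cast_nonneg _)

theorem pow_degree_mul_wpow (c : ℝ) (τ : ℕ →₀ ℕ) :
    c ^ degree τ * wpow ρ ψ τ = wpow (fun j => c * ρ j) ψ τ := by
  rw [wpow, wpow, degree_apply, Finsupp.prod, Finsupp.prod, ← prod_pow_eq_pow_sum,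
    ← prod_mul_distrib]
  exact prod_congr rfl fun j _ => by ring

theorem sum_Iic_wpow_le_exp (hρ : ∀ j, 0 ≤ ρ j) (hψ : ∀ j, 0 ≤ ψ j)
    (hsum : Summable fun j => ρ j * ψ j) (μ : ℕ →₀ ℕ) :
    ∑ σ ∈ Iic μ, wpow ρ ψ σ ≤ Real.exp (∑' j, ρ j * ψ j) := by
  have hx : ∀ j, 0 ≤ ρ j * ψ j := fun j => mul_nonneg (hρ j) (hψ j)
  calc ∑ σ ∈ Iic μ, wpow ρ ψ σ
      = ∏ j ∈ μ.support, ∑ m ∈ range (μ j + 1), (ρ j * ψ j) ^ m / (m.factorial : ℝ) := by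
        simp only [wpow]
        rw [sum_Iic_prod μ _ fun _ => by simp, Finsupp.prod]
        simp only [Nat.range_succ_eq_Iic]
    _ ≤ ∏ j ∈ μ.support, Real.exp (ρ j * ψ j) :=
        prod_le_prod (fun j _ => sum_nonneg fun m _ => div_nonneg (pow_nonneg (hx j) _)
          (Nat.cast_nonneg _)) fun j _ => Real.sum_le_exp_of_nonneg (hx j) _
    _ = Real.exp (∑ j ∈ μ.support, ρ j * ψ j) := (Real.exp_sum _ _).symm
    _ ≤ Real.exp (∑' j, ρ j * ψ j) := Real.exp_le_exp.mpr (hsum.sum_le_tsum _ fun j _ => hx j)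

theorem epshat_le_sum_wpow (hρ : ∀ j, 0 ≤ ρ j) (hψ : ∀ j, 0 ≤ ψ j) (hφ : ∀ j, 0 ≤ φ j)
    {r : ℝ} (hr : 0 ≤ r) {μ ν : ℕ →₀ ℕ} (hfact : mfact μ / mfact ν ≤ r ^ degree (μ - ν)) :
    epshat ρ ψ φ μ ν ≤ ∑ j ∈ (μ - ν).support,
      √r * (ρ j * φ j) * wpow (fun i => √r * ρ i) ψ (μ - ν - single j 1) := by
  have hsqrt : √(mfact μ / mfact ν) ≤ √r ^ degree (μ - ν) :=
    Real.sqrt_le_iff.mpr ⟨by positivity, by rwa [← pow_mul, mul_comm, pow_mul, Real.sq_sqrt hr]⟩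
  refine sum_le_sum fun j hj => ?_
  calc _ ≤ √r ^ degree (μ - ν) * wpow ρ ψ (μ - ν - single j 1) * (ρ j * φ j) :=
        mul_le_mul_of_nonneg_right (mul_le_mul_of_nonneg_right hsqrt (wpow_nonneg hρ hψ _))
          (mul_nonneg (hρ j) (hφ j))
    _ = _ := by
        rw [← degree_tsub_single_add_one hj, pow_succ, ← pow_degree_mul_wpow]
        ring

theorem sum_Iio_epshat_le (hρ : ∀ j, 0 ≤ ρ j) (hψ : ∀ j, 0 ≤ ψ j) (hφ : ∀ j, 0 ≤ φ j)
    {r : ℝ} (hr : 0 ≤ r) {μ : ℕ →₀ ℕ}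
    (hfact : ∀ ν ≤ μ, mfact μ / mfact ν ≤ r ^ degree (μ - ν)) :
    ∑ ν ∈ Iio μ, epshat ρ ψ φ μ ν ≤ ∑ j ∈ μ.support,
      √r * (ρ j * φ j) * ∑ σ ∈ Iic (μ - single j 1), wpow (fun i => √r * ρ i) ψ σ := by
  calc ∑ ν ∈ Iio μ, epshat ρ ψ φ μ ν
      ≤ ∑ ν ∈ Iio μ, ∑ j ∈ (μ - ν).support,
          √r * (ρ j * φ j) * wpow (fun i => √r * ρ i) ψ (μ - ν - single j 1) :=
        sum_le_sum fun ν hν => epshat_le_sum_wpow hρ hψ hφ hr (hfact ν (mem_Iio.mp hν).le)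
    _ = _ := by
        rw [sum_Iio_sum_support_tsub μ fun j σ => √r * (ρ j * φ j) * wpow (fun i => √r * ρ i) ψ σ]
        simp only [Finset.mul_sum]

end Weights

theorem stmt13_general (r : ℕ) (K Khat : ℝ)
    (ρ ψ φ : ℕ → ℝ) (hρ : ∀ j, 0 < ρ j) (hψ : ∀ j, 0 ≤ ψ j) (hφ : ∀ j, 0 ≤ φ j)
    (hψsum : Summable fun j => ρ j * ψ j) (hψK : ∑' j, ρ j * ψ j ≤ K)
    (hφsum : Summable fun j => ρ j * φ j) (hφK : ∑' j, ρ j * φ j ≤ Khat)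
    (μ : ℕ →₀ ℕ)
    (hfact : ∀ ν : ℕ →₀ ℕ, ν ≤ μ →
      mfact μ / mfact ν ≤ (r : ℝ) ^ ((μ - ν).sum fun _ n => n)) :
    ∑ ν ∈ Finset.Iio μ, epshat ρ ψ φ μ ν
      ≤ Real.sqrt r * Khat * Real.exp (Real.sqrt r * K) := by
  set c := √(r : ℝ)
  have hc : 0 ≤ c := Real.sqrt_nonneg _
  have hρ' : ∀ j, 0 ≤ ρ j := fun j => (hρ j).le
  have hexp (κ : ℕ →₀ ℕ) : ∑ σ ∈ Iic κ, wpow (fun i => c * ρ i) ψ σ ≤ Real.exp (c * K) := by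
    refine (sum_Iic_wpow_le_exp (fun j => mul_nonneg hc (hρ' j)) hψ ?_ κ).trans ?_
    · simpa only [mul_assoc] using hψsum.mul_left c
    · refine Real.exp_le_exp.mpr ?_
      simpa only [mul_assoc, tsum_mul_left] using mul_le_mul_of_nonneg_left hψK hc
  have hφsupp : ∑ j ∈ μ.support, ρ j * φ j ≤ Khat :=
    (hφsum.sum_le_tsum _ fun j _ => mul_nonneg (hρ' j) (hφ j)).trans hφK
  calc ∑ ν ∈ Iio μ, epshat ρ ψ φ μ ν
      ≤ ∑ j ∈ μ.support, c * (ρ j * φ j) * ∑ σ ∈ Iic (μ - single j 1),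
          wpow (fun i => c * ρ i) ψ σ := sum_Iio_epshat_le hρ' hψ hφ (Nat.cast_nonneg r) hfact
    _ ≤ ∑ j ∈ μ.support, c * (ρ j * φ j) * Real.exp (c * K) := by
        gcongr with j
        · exact mul_nonneg hc (mul_nonneg (hρ' j) (hφ j))
        · exact hexp _
    _ = c * Real.exp (c * K) * ∑ j ∈ μ.support, ρ j * φ j := by
        rw [Finset.mul_sum]
        exact sum_congr rfl fun j _ => by ring
    _ ≤ c * Real.exp (c * K) * Khat := mul_le_mul_of_nonneg_left hφsupp (by positivity)
    _ = c * Khat * Real.exp (c * K) := by ring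

/-- Key combinatorial estimate (pointwise in `x ∈ D`) from the Hermite summability
proof: `∑_{ν ∈ S_μ} ε̂(μ,ν) ≤ √r K̂ e^{√r K}`. -/
theorem stmt13 (r : ℕ) (hr : 1 ≤ r) (K Khat : ℝ) (hK : 0 < K) (hKhat : 0 ≤ Khat)
    (ρ ψ φ : ℕ → ℝ) (hρ : ∀ j, 0 < ρ j) (hψ : ∀ j, 0 ≤ ψ j) (hφ : ∀ j, 0 ≤ φ j)
    (hψsum : Summable fun j => ρ j * ψ j) (hψK : ∑' j, ρ j * ψ j ≤ K)
    (hφsum : Summable fun j => ρ j * φ j) (hφK : ∑' j, ρ j * φ j ≤ Khat)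
    (μ : ℕ →₀ ℕ) (hμ : ∀ j, μ j ≤ r)
    (hfact : ∀ ν : ℕ →₀ ℕ, ν ≤ μ →
      mfact μ / mfact ν ≤ (r : ℝ) ^ ((μ - ν).sum fun _ n => n)) :
    ∑ ν ∈ Finset.Iio μ, epshat ρ ψ φ μ ν
      ≤ Real.sqrt r * Khat * Real.exp (Real.sqrt r * K) :=
  stmt13_general r K Khat ρ ψ φ hρ hψ hφ hψsum hψK hφsum hφK μ hfact
end

section
/- Let y ∈ [−1,1]^ℕ and (ρ_j)_{j≥1} positive with ‖(∑_j ρ_j|ψ_j|)/ā‖_{L^∞} = θ < 1 for functions ā, ψ_j ∈ L^∞(D) with ess inf ā > 0. Define ā_y := ā + ∑_j y_j ψ_j and ψ_{y,j} := (1−|y_j|)ρ_j ψ_j. Then ‖(∑_j |ψ_{y,j}|)/ā_y‖_{L^∞} ≤ θ < 1, uniformly in y. -/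
open scoped BigOperators
open MeasureTheory

/-- Uniform ellipticity of the shifted-and-rescaled affine family: with
`ā_y = ā + ∑_j y_j ψ_j` and `ψ_{y,j} = (1-|y_j|) ρ_j ψ_j`, one has
`∑_j |ψ_{y,j}| ≤ θ ā_y` a.e., uniformly in `y ∈ [-1,1]^ℕ`. -/
theorem stmt17 {D : Type*} [MeasurableSpace D] (μ : Measure D)
    (abar : D → ℝ) (ψ : ℕ → D → ℝ) (ρ : ℕ → ℝ) (hρ : ∀ j, 1 ≤ ρ j)
    (θ : ℝ) (hθ0 : 0 ≤ θ) (hθ1 : θ < 1)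
    (r : ℝ) (hr : 0 < r) (habar : ∀ᵐ x ∂μ, r ≤ abar x)
    (hψsum : ∀ᵐ x ∂μ, Summable fun j => ρ j * |ψ j x|)
    (hθ : ∀ᵐ x ∂μ, ∑' j, ρ j * |ψ j x| ≤ θ * abar x)
    (y : ℕ → ℝ) (hy : ∀ j, |y j| ≤ 1) :
    ∀ᵐ x ∂μ, ∑' j, |(1 - |y j|) * ρ j * ψ j x|
      ≤ θ * (abar x + ∑' j, y j * ψ j x) := by
  filter_upwards [habar, hψsum, hθ] with x hrx hsum hxθ
  have hρ0 : ∀ j, (0:ℝ) ≤ ρ j := fun j => le_trans zero_le_one (hρ j)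
  have hf0 : ∀ j, 0 ≤ ρ j * |ψ j x| := fun j => mul_nonneg (hρ0 j) (abs_nonneg _)
  have hg : Summable fun j => |y j| * (ρ j * |ψ j x|) := by
    apply hsum.of_nonneg_of_le (fun j => mul_nonneg (abs_nonneg _) (hf0 j))
    intro j
    calc |y j| * (ρ j * |ψ j x|) ≤ 1 * (ρ j * |ψ j x|) :=
          mul_le_mul_of_nonneg_right (hy j) (hf0 j)
      _ = _ := one_mul _
  have habs : Summable fun j => |y j * ψ j x| := by
    apply hsum.of_nonneg_of_le (fun j => abs_nonneg _)
    intro j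
    rw [abs_mul]
    exact mul_le_mul (le_trans (hy j) (hρ j)) le_rfl (abs_nonneg _) (hρ0 j)
  have hyψ : Summable fun j => y j * ψ j x := habs.of_abs
  have hterm : ∀ j, |(1 - |y j|) * ρ j * ψ j x|
      = ρ j * |ψ j x| - |y j| * (ρ j * |ψ j x|) := by
    intro j
    have h1 : 0 ≤ 1 - |y j| := sub_nonneg.2 (hy j)
    rw [abs_mul, abs_mul, abs_of_nonneg h1, abs_of_nonneg (hρ0 j)]
    ring
  have hT : -(∑' j, |y j * ψ j x|) ≤ ∑' j, y j * ψ j x := by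
    have := norm_tsum_le_tsum_norm (f := fun j => y j * ψ j x)
      (by simpa only [Real.norm_eq_abs] using habs)
    simp only [Real.norm_eq_abs] at this
    linarith [neg_abs_le (∑' j, y j * ψ j x)]
  have hg_le : θ * ∑' j, |y j * ψ j x| ≤ ∑' j, |y j| * (ρ j * |ψ j x|) := by
    rw [← tsum_mul_left]
    apply Summable.tsum_le_tsum _ (habs.mul_left θ) hg
    intro j
    rw [abs_mul]
    calc θ * (|y j| * |ψ j x|) ≤ ρ j * (|y j| * |ψ j x|) := by
          apply mul_le_mul_of_nonneg_right (le_trans hθ1.le (hρ j))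
          exact mul_nonneg (abs_nonneg _) (abs_nonneg _)
      _ = |y j| * (ρ j * |ψ j x|) := by ring
  calc ∑' j, |(1 - |y j|) * ρ j * ψ j x|
      = ∑' j, (ρ j * |ψ j x| - |y j| * (ρ j * |ψ j x|)) := by simp_rw [hterm]
    _ = (∑' j, ρ j * |ψ j x|) - ∑' j, |y j| * (ρ j * |ψ j x|) := Summable.tsum_sub hsum hg
    _ ≤ θ * abar x - θ * ∑' j, |y j * ψ j x| := by linarith
    _ ≤ θ * abar x + θ * ∑' j, y j * ψ j x := by nlinarith
    _ = θ * (abar x + ∑' j, y j * ψ j x) := by ring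
end
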